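/- Skeptical stage semantics violates weak reference independence: there exist argumentation frameworks AF = (AR, Attacks) and AF' = (AR', Attacks') with AF ≼_N AF' such that, writing E for the intersection of all stage extensions of AF and E' for the intersection of all stage extensions of AF', it holds that E' ⊆ AR and E' ≠ E. A witness is AF = ({a, b}, {(a, b)}) and AF' = ({a, b, c}, {(a, b), (b, c), (c, a)}): the stage extensions of AF are {{a}} and those of AF' are {{a}, {b}, {c}}, so E = {a} and E' = ∅. -/

import Mathlib

/-- An (abstract) argumentation framework: a finite set of arguments
together with an attack relation on those arguments. -/
structure ArgFramework (α : Type*) where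
  args : Set α
  att : Set (α × α)
  args_finite : args.Finite
  att_sub : att ⊆ args ×ˢ args

namespace ArgFramework

variable {α : Type*}

/-- `S` is conflict-free: no member of `S` attacks a member of `S`. -/
def ConflictFree (F : ArgFramework α) (S : Set α) : Prop :=
  S ⊆ F.args ∧ ∀ a ∈ S, ∀ b ∈ S, (a, b) ∉ F.att

/-- `S` is a maximal (w.r.t. set inclusion) conflict-free set. -/
def MaxConflictFree (F : ArgFramework α) (S : Set α) : Prop :=
  F.ConflictFree S ∧ ∀ T, F.ConflictFree T → S ⊆ T → S = T

/-- Naive extensions are exactly the maximal conflict-free sets. -/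
def NaiveExt (F : ArgFramework α) (S : Set α) : Prop :=
  F.MaxConflictFree S

/-- The range of `S`: `S` together with all arguments attacked by `S`. -/
def range (F : ArgFramework α) (S : Set α) : Set α :=
  S ∪ {b | ∃ a ∈ S, (a, b) ∈ F.att}

/-- `S` is a stage extension: a conflict-free set whose range is maximal
(w.r.t. set inclusion) among ranges of conflict-free sets. -/
def StageExt (F : ArgFramework α) (S : Set α) : Prop :=
  F.ConflictFree S ∧ ¬ ∃ T, F.ConflictFree T ∧ F.range S ⊂ F.range T

/-- `S` is admissible: conflict-free, and every attacker of a member of `S`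
is attacked by some member of `S`. -/
def Admissible (F : ArgFramework α) (S : Set α) : Prop :=
  F.ConflictFree S ∧ ∀ a ∈ S, ∀ b, (b, a) ∈ F.att → ∃ c ∈ S, (c, b) ∈ F.att

/-- `S` is a maximal (w.r.t. set inclusion) admissible set. -/
def MaxAdmissible (F : ArgFramework α) (S : Set α) : Prop :=
  F.Admissible S ∧ ∀ T, F.Admissible T → S ⊆ T → S = T

/-- Preferred extensions are the maximal admissible sets. -/
def PreferredExt (F : ArgFramework α) (S : Set α) : Prop :=
  F.MaxAdmissible S

/-- `a` is acceptable w.r.t. `S`: every attacker of `a` is attacked by `S`. -/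
def Acceptable (F : ArgFramework α) (S : Set α) (a : α) : Prop :=
  ∀ b, (b, a) ∈ F.att → ∃ c ∈ S, (c, b) ∈ F.att

/-- `S` is a complete extension: admissible and containing every argument
acceptable w.r.t. `S`. -/
def CompleteExt (F : ArgFramework α) (S : Set α) : Prop :=
  F.Admissible S ∧ ∀ a ∈ F.args, F.Acceptable S a → a ∈ S

/-- `S` is the grounded extension: the minimal complete extension. -/
def GroundedExt (F : ArgFramework α) (S : Set α) : Prop :=
  F.CompleteExt S ∧ ∀ T, F.CompleteExt T → S ⊆ T

/-- `S` is a stable extension: conflict-free and attacking every outside argument. -/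
def StableExt (F : ArgFramework α) (S : Set α) : Prop :=
  F.ConflictFree S ∧ ∀ b ∈ F.args \ S, ∃ a ∈ S, (a, b) ∈ F.att

/-- `F'` is a normal expansion of `F`: arguments and attacks are only added,
and no added attack is between two arguments of `F`. -/
def NormalExpansion (F F' : ArgFramework α) : Prop :=
  F.args ⊆ F'.args ∧ F.att ⊆ F'.att ∧
    ∀ a b, (a, b) ∈ F'.att → (a, b) ∉ F.att → ¬(a ∈ F.args ∧ b ∈ F.args)

/-- An attack sequence: a nonempty sequence of pairwise distinct arguments
in which each argument attacks its successor. -/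
def AttackSeq (F : ArgFramework α) (l : List α) : Prop :=
  l ≠ [] ∧ l.Nodup ∧ (∀ a ∈ l, a ∈ F.args) ∧
    l.Chain' (fun a b => (a, b) ∈ F.att)

/-- `b` is reachable from `a`: there is an attack sequence from `a` to `b`. -/
def Reachable (F : ArgFramework α) (a b : α) : Prop :=
  ∃ l : List α, F.AttackSeq l ∧ l.head? = some a ∧ l.getLast? = some b

/-- An attack cycle: a sequence `a₁, …, aₙ` (n ≥ 2) of arguments in which each
argument attacks its successor, `a₁ = aₙ`, and `a₁, …, a_{n-1}` are pairwise
distinct. -/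
def AttackCycle (F : ArgFramework α) (l : List α) : Prop :=
  2 ≤ l.length ∧ (∀ a ∈ l, a ∈ F.args) ∧
    l.Chain' (fun a b => (a, b) ∈ F.att) ∧
    l.head? = l.getLast? ∧ l.dropLast.Nodup

/-- `F'` is a non-cyclic expansion of `F`: an expansion whose attack cycles
are exactly the attack cycles of `F`. -/
def NonCyclicExpansion (F F' : ArgFramework α) : Prop :=
  F.args ⊆ F'.args ∧ F.att ⊆ F'.att ∧
    ∀ l, F'.AttackCycle l ↔ F.AttackCycle l

/-- `F'` is a rational man's expansion of `F`: a normal, non-cyclic expansion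
such that no added argument reachable from an initial argument `a` allows `a`
to occur in any attack cycle of `F'`. -/
def RationalManExpansion (F F' : ArgFramework α) : Prop :=
  F.NormalExpansion F' ∧ F.NonCyclicExpansion F' ∧
    ∀ a ∈ F.args, ∀ b ∈ F'.args \ F.args, F'.Reachable a b →
      ∀ l, F'.AttackCycle l → a ∉ l

end ArgFramework

/-!
Write `a, b, c` as `0, 1, 2`. In `a → b` the set `{a}` is stable, so every stage extension has
full range; since `a` is unattacked, every stage extension contains `a`. In the expansion by the
cycle `a → b → c → a`, a conflict-free set has at most one element and its range misses an
argument; so `{b}`, whose range misses only `a`, is a stage extension, and `a` is no longer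
skeptically accepted.
-/

namespace ArgFramework

variable {α : Type*} (F : ArgFramework α) {S T : Set α}

theorem range_subset_args (hS : S ⊆ F.args) : F.range S ⊆ F.args := by
  rintro x (hx | ⟨a, -, hax⟩)
  · exact hS hx
  · exact (F.att_sub hax).2

variable {F}

theorem StableExt.range_eq_args (hS : F.StableExt S) : F.range S = F.args := by
  refine (F.range_subset_args hS.1.1).antisymm fun x hx => ?_
  by_cases hxS : x ∈ S
  · exact Or.inl hxS
  · exact Or.inr (hS.2 x ⟨hx, hxS⟩)

theorem StageExt.range_eq_args_of_stableExt (hS : F.StableExt S) (hT : F.StageExt T) :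
    F.range T = F.args := by
  refine (F.range_subset_args hT.1.1).eq_of_not_ssubset fun hlt => hT.2 ⟨S, hS.1, ?_⟩
  rwa [hS.range_eq_args]

theorem mem_of_range_eq_args {a : α} (ha : a ∈ F.args) (hunattacked : ∀ b, (b, a) ∉ F.att)
    (hT : F.range T = F.args) : a ∈ T := by
  rw [← hT] at ha
  rcases ha with ha | ⟨b, -, hba⟩
  · exact ha
  · exact absurd hba (hunattacked b)

theorem stageExt_of_forall_range_ne_args (hS : F.ConflictFree S)
    (hmiss : (F.args \ F.range S).Subsingleton)
    (hpartial : ∀ T, F.ConflictFree T → F.range T ≠ F.args) : F.StageExt S := by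
  refine ⟨hS, fun ⟨T, hT, hST⟩ => hpartial T hT ?_⟩
  obtain ⟨y, hyT, hyS⟩ := Set.exists_of_ssubset hST
  refine (F.range_subset_args hT.1).antisymm fun x hx => ?_
  by_cases hxS : x ∈ F.range S
  · exact hST.subset hxS
  · rwa [hmiss ⟨hx, hxS⟩ ⟨F.range_subset_args hT.1 hyT, hyS⟩]

end ArgFramework

open ArgFramework

def singleAttack : ArgFramework ℕ where
  args := {0, 1}
  att := {(0, 1)}
  args_finite := Set.toFinite _
  att_sub := by simp

def threeCycle : ArgFramework ℕ where
  args := {0, 1, 2}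
  att := {(0, 1), (1, 2), (2, 0)}
  args_finite := Set.toFinite _
  att_sub := by simp [Set.insert_subset_iff]

theorem singleAttack_normalExpansion_threeCycle : singleAttack.NormalExpansion threeCycle := by
  refine ⟨?_, ?_, ?_⟩
  · simp [singleAttack, threeCycle, Set.insert_subset_iff]
  · simp [singleAttack, threeCycle]
  · rintro a b hab hnew ⟨ha, hb⟩
    simp only [singleAttack, threeCycle, Set.mem_insert_iff, Set.mem_singleton_iff,
      Prod.mk.injEq] at *
    omega

theorem singleAttack_stableExt_zero : singleAttack.StableExt {0} := by
  refine ⟨⟨?_, ?_⟩, ?_⟩ <;> simp [singleAttack]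

theorem zero_mem_of_singleAttack_stageExt {T : Set ℕ} (hT : singleAttack.StageExt T) : 0 ∈ T :=
  mem_of_range_eq_args (by simp [singleAttack]) (by simp [singleAttack])
    (hT.range_eq_args_of_stableExt singleAttack_stableExt_zero)

theorem threeCycle_range_ne_args {T : Set ℕ} (hT : threeCycle.ConflictFree T) :
    threeCycle.range T ≠ threeCycle.args := by
  intro h
  have hcover : ∀ x ∈ threeCycle.args, x ∈ threeCycle.range T := fun x hx => h ▸ hx
  have h0 := hcover 0 (by simp [threeCycle])
  have h1 := hcover 1 (by simp [threeCycle])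
  have h2 := hcover 2 (by simp [threeCycle])
  have hcf := hT.2
  simp only [ArgFramework.range, threeCycle, Set.mem_union, Set.mem_ofPred_eq, Set.mem_insert_iff,
    Set.mem_singleton_iff, Prod.mk.injEq] at h0 h1 h2 hcf
  grind

theorem threeCycle_stageExt_one : threeCycle.StageExt {1} := by
  refine stageExt_of_forall_range_ne_args ?_ ?_ fun T hT => threeCycle_range_ne_args hT
  · simp [ConflictFree, threeCycle]
  · refine (Set.subsingleton_singleton (a := 0)).anti fun x => ?_
    simp only [ArgFramework.range, threeCycle, Set.mem_sdiff, Set.mem_union, Set.mem_ofPred_eq,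
      Set.mem_insert_iff, Set.mem_singleton_iff, Prod.mk.injEq]
    grind

/-- Skeptical stage semantics violates weak reference
independence: there are a framework and a normal expansion of it such that
the intersection of all stage extensions of the expansion is contained in the
original arguments and differs from the intersection of all stage extensions
of the original framework. -/
theorem skeptical_stage_violates_weak_reference_independence :
    ∃ F F' : ArgFramework ℕ,
      F.NormalExpansion F' ∧
      (⋂₀ {T | F'.StageExt T}) ⊆ F.args ∧
      (⋂₀ {T | F'.StageExt T}) ≠ (⋂₀ {T | F.StageExt T}) := by
  have hE' : ⋂₀ {T | threeCycle.StageExt T} ⊆ {1} :=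
    Set.sInter_subset_of_mem threeCycle_stageExt_one
  have hE : 0 ∈ ⋂₀ {T | singleAttack.StageExt T} := fun _ => zero_mem_of_singleAttack_stageExt
  refine ⟨singleAttack, threeCycle, singleAttack_normalExpansion_threeCycle,
    hE'.trans (by simp [singleAttack]), fun h => ?_⟩
  rw [← h] at hE
  simpa using hE' hE
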